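/- arXiv:math/0012068 — 2 statements merged into one kernel-verified Lean document; each statement's English description precedes it below -/
import Mathlib

section
/- Let α ≥ 1/2, μ > 0, s > 1, and θ₀ ∈ H^s on the torus. Then there exists T = μ/(8||θ₀||_{H^s} C) > 0 (C an absolute constant depending on s) such that the integral equation θ(t) = θ₀ + ∫₀ᵗ G*(uθ)(τ)dτ, with u = (-R₂θ, R₁θ) and Ĝ(k) = ik/(1+μ|k|^{2α}), has a unique solution θ ∈ L^∞([0,T]; H^s) with ||θ||_{L^∞ H^s} ≤ 2||θ₀||_{H^s}. -/
open MeasureTheory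

/-- local existence for the regularized QG equation by contraction
mapping. `H` abstracts the Sobolev space `H^s(Ω)` with `s > 1` (a Banach algebra with
multiplication `mult`, algebra constant `C`), `Uop` abstracts `θ ↦ u = (-R₂θ, R₁θ)`
(`‖Uop θ‖ ≤ ‖θ‖`), and `Gop` abstracts convolution with the kernel `G` having
multiplier `Ĝ(k) = ik/(1+μ|k|^{2α})`, `α ≥ 1/2` (`‖Gop F‖ ≤ (1/μ)‖F‖`).
For `θ₀ ∈ H^s`, with `T = μ/(8‖θ₀‖C) > 0`, the integral equation
`θ(t) = θ₀ + ∫₀ᵗ G*(uθ)(τ) dτ` has a unique solution in `L^∞([0,T];H^s)` with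
`‖θ‖_{L^∞ H^s} ≤ 2‖θ₀‖`. -/
theorem regularized_qg_local_existence {H : Type*} [NormedAddCommGroup H]
    [NormedSpace ℝ H] [CompleteSpace H]
    (C μ : ℝ) (hC : 0 < C) (hμ : 0 < μ)
    (mult : H →L[ℝ] H →L[ℝ] H) (hmult : ∀ x y, ‖mult x y‖ ≤ C * ‖x‖ * ‖y‖)
    (Gop Uop : H →L[ℝ] H)
    (hG : ∀ x, ‖Gop x‖ ≤ (1 / μ) * ‖x‖) (hU : ∀ x, ‖Uop x‖ ≤ ‖x‖)
    (θ₀ : H) (hθ₀ : θ₀ ≠ 0) :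
    ∃ T : ℝ, T = μ / (8 * ‖θ₀‖ * C) ∧ 0 < T ∧
      ∃ θ : ℝ → H,
        ContinuousOn θ (Set.Icc 0 T) ∧
        (∀ t ∈ Set.Icc (0:ℝ) T, ‖θ t‖ ≤ 2 * ‖θ₀‖) ∧
        (∀ t ∈ Set.Icc (0:ℝ) T,
          θ t = θ₀ + ∫ τ in (0:ℝ)..t, Gop (mult (Uop (θ τ)) (θ τ))) ∧
        (∀ θ' : ℝ → H, ContinuousOn θ' (Set.Icc 0 T) →
          (∀ t ∈ Set.Icc (0:ℝ) T, ‖θ' t‖ ≤ 2 * ‖θ₀‖) →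
          (∀ t ∈ Set.Icc (0:ℝ) T,
            θ' t = θ₀ + ∫ τ in (0:ℝ)..t, Gop (mult (Uop (θ' τ)) (θ' τ))) →
          ∀ t ∈ Set.Icc (0:ℝ) T, θ' t = θ t) := by
  classical
  set N : ℝ := ‖θ₀‖ with hNdef
  have hN : 0 < N := norm_pos_iff.mpr hθ₀
  set T : ℝ := μ / (8 * N * C) with hTdef
  have hT : 0 < T := div_pos hμ (by positivity)
  set v : H → H := fun x => Gop (mult (Uop x) x) with hvdef
  have hv_cont : Continuous v := by
    exact Gop.continuous.comp ((mult.continuous.comp Uop.continuous).clm_apply continuous_id)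
  -- pointwise bound
  have hv_bound : ∀ x : H, ‖x‖ ≤ 2 * N → ‖v x‖ ≤ 4 * C * N ^ 2 / μ := by
    intro x hx
    have h1 : ‖v x‖ ≤ (1 / μ) * ‖mult (Uop x) x‖ := hG _
    have h2 : ‖mult (Uop x) x‖ ≤ C * ‖Uop x‖ * ‖x‖ := hmult _ _
    have h3 : ‖Uop x‖ ≤ ‖x‖ := hU x
    have hx0 : 0 ≤ ‖x‖ := norm_nonneg x
    have h4 : ‖mult (Uop x) x‖ ≤ C * ‖x‖ * ‖x‖ := h2.trans (by gcongr)
    calc ‖v x‖ ≤ (1 / μ) * (C * ‖x‖ * ‖x‖) := h1.trans (by gcongr <;> positivity)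
      _ ≤ (1 / μ) * (C * (2 * N) * (2 * N)) := by gcongr <;> positivity
      _ = 4 * C * N ^ 2 / μ := by ring
  -- Lipschitz estimate on the ball of radius 2N
  set Lr : ℝ := 4 * C * N / μ with hLrdef
  have hLr : 0 < Lr := by positivity
  have hv_lip : ∀ x y : H, ‖x‖ ≤ 2 * N → ‖y‖ ≤ 2 * N →
      ‖v x - v y‖ ≤ Lr * ‖x - y‖ := by
    intro x y hx hy
    have key : mult (Uop x) x - mult (Uop y) y
        = mult (Uop x) (x - y) + mult (Uop (x - y)) y := by
      simp only [map_sub, ContinuousLinearMap.sub_apply]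
      abel
    have h1 : ‖v x - v y‖ ≤ (1 / μ) * ‖mult (Uop x) x - mult (Uop y) y‖ := by
      have := hG (mult (Uop x) x - mult (Uop y) y)
      simpa [hvdef, map_sub] using this
    have h2 : ‖mult (Uop x) x - mult (Uop y) y‖
        ≤ C * ‖x‖ * ‖x - y‖ + C * ‖x - y‖ * ‖y‖ := by
      rw [key]
      refine (norm_add_le _ _).trans (add_le_add ?_ ?_)
      · exact (hmult _ _).trans (mul_le_mul_of_nonneg_right
          (mul_le_mul_of_nonneg_left (hU x) hC.le) (norm_nonneg _))
      · exact (hmult _ _).trans (mul_le_mul_of_nonneg_right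
          (mul_le_mul_of_nonneg_left (hU (x - y)) hC.le) (norm_nonneg _))
    calc ‖v x - v y‖ ≤ (1 / μ) * (C * ‖x‖ * ‖x - y‖ + C * ‖x - y‖ * ‖y‖) :=
          h1.trans (by gcongr <;> positivity)
      _ ≤ (1 / μ) * (C * (2 * N) * ‖x - y‖ + C * ‖x - y‖ * (2 * N)) := by
          gcongr <;> positivity
      _ = Lr * ‖x - y‖ := by rw [hLrdef]; ring
  have hball : ∀ x ∈ Metric.closedBall θ₀ N, ‖x‖ ≤ 2 * N := by
    intro x hx
    have : ‖x - θ₀‖ ≤ N := by simpa [dist_eq_norm] using hx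
    calc ‖x‖ = ‖x - θ₀ + θ₀‖ := by congr 1; abel
      _ ≤ ‖x - θ₀‖ + ‖θ₀‖ := norm_add_le _ _
      _ ≤ N + N := add_le_add this (le_of_eq hNdef.symm)
      _ = 2 * N := by ring
  -- Picard–Lindelöf hypotheses
  have hpl : IsPicardLindelof (fun _ : ℝ => v) (tmin := 0) (tmax := T) ⟨0, le_rfl, hT.le⟩ θ₀
      (⟨N, hN.le⟩ : NNReal) 0 (⟨4 * C * N ^ 2 / μ, by positivity⟩ : NNReal) (⟨Lr, hLr.le⟩ : NNReal) := by
    constructor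
    · intro t _
      refine LipschitzOnWith.of_dist_le_mul ?_
      intro x hx y hy
      have := hv_lip x y (hball x hx) (hball y hy)
      rw [dist_eq_norm, dist_eq_norm]; exact this
    · intro x _; exact continuousOn_const
    · intro t _ x hx; exact hv_bound x (hball x hx)
    · have hmaxT : max (T - 0) (0 - 0) = T := by
        rw [sub_zero, sub_zero]; exact max_eq_left hT.le
      have hTv : (4 * C * N ^ 2 / μ) * T = N / 2 := by
        rw [hTdef]; field_simp; ring
      show (4 * C * N ^ 2 / μ) * max (T - 0) (0 - 0) ≤ N - ((0 : NNReal) : ℝ)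
      rw [hmaxT, hTv]; simp only [NNReal.coe_zero]; linarith
  obtain ⟨f, hf0', hfd⟩ := hpl.exists_eq_forall_mem_Icc_hasDerivWithinAt₀
  have hf0 : f 0 = θ₀ := hf0'
  have hfc : ContinuousOn f (Set.Icc 0 T) := fun t ht => (hfd t ht).continuousWithinAt
  -- the integral equation
  have hInt : ∀ t ∈ Set.Icc (0:ℝ) T, f t = θ₀ + ∫ τ in (0:ℝ)..t, v (f τ) := by
    intro t ht
    have h01 : (0:ℝ) ≤ t := ht.1
    have hsub : Set.Icc (0:ℝ) t ⊆ Set.Icc 0 T := Set.Icc_subset_Icc le_rfl ht.2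
    have heq : (∫ τ in (0:ℝ)..t, v (f τ)) = f t - f 0 := by
      apply intervalIntegral.integral_eq_sub_of_hasDeriv_right_of_le h01
        (hfc.mono hsub)
      · intro x hx
        have hx' : x ∈ Set.Icc (0:ℝ) T := hsub ⟨hx.1.le, hx.2.le⟩
        exact (hfd x hx').mono_of_mem_nhdsWithin
          (Icc_mem_nhdsGT_of_mem ⟨hx.1.le, lt_of_lt_of_le hx.2 ht.2⟩)
      · apply ContinuousOn.intervalIntegrable
        rw [Set.uIcc_of_le h01]
        exact hv_cont.comp_continuousOn (hfc.mono hsub)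
    rw [heq, hf0]; abel
  -- key a priori estimate
  have hkey : ∀ t ∈ Set.Icc (0:ℝ) T, (∀ τ ∈ Set.Icc (0:ℝ) t, ‖f τ‖ ≤ 2 * N) →
      ‖f t‖ ≤ 3 / 2 * N := by
    intro t ht hb
    have h01 : (0:ℝ) ≤ t := ht.1
    have hft : f t - θ₀ = ∫ τ in (0:ℝ)..t, v (f τ) := by
      rw [hInt t ht]; abel
    have hnorm : ‖f t - θ₀‖ ≤ (4 * C * N ^ 2 / μ) * |t - 0| := by
      rw [hft]
      apply intervalIntegral.norm_integral_le_of_norm_le_const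
      intro τ hτ
      rw [Set.uIoc_of_le h01] at hτ
      exact hv_bound _ (hb τ ⟨hτ.1.le, hτ.2⟩)
    have hTt : (4 * C * N ^ 2 / μ) * |t - 0| ≤ (4 * C * N ^ 2 / μ) * T := by
      have : |t - 0| = t := by rw [sub_zero, abs_of_nonneg h01]
      rw [this]; exact mul_le_mul_of_nonneg_left ht.2 (by positivity)
    have hTv : (4 * C * N ^ 2 / μ) * T = N / 2 := by
      rw [hTdef]; field_simp; ring
    have : ‖f t - θ₀‖ ≤ N / 2 := le_trans hnorm (by rw [← hTv]; exact hTt)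
    calc ‖f t‖ = ‖f t - θ₀ + θ₀‖ := by congr 1; abel
      _ ≤ ‖f t - θ₀‖ + ‖θ₀‖ := norm_add_le _ _
      _ ≤ N / 2 + N := add_le_add this (le_of_eq hNdef.symm)
      _ = 3 / 2 * N := by ring
  -- boundedness
  have hbound : ∀ t ∈ Set.Icc (0:ℝ) T, ‖f t‖ ≤ 2 * N := by
    by_contra hcon
    push_neg at hcon
    obtain ⟨t₁, ht₁, hgt⟩ := hcon
    set B : Set ℝ := Set.Icc 0 T ∩ (fun t => ‖f t‖) ⁻¹' Set.Ici (2 * N) with hBdef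
    have hBclosed : IsClosed B :=
      hfc.norm.preimage_isClosed_of_isClosed isClosed_Icc isClosed_Ici
    have hBne : B.Nonempty := ⟨t₁, ht₁, hgt.le⟩
    have hBbdd : BddBelow B := ⟨0, fun x hx => hx.1.1⟩
    set t₂ : ℝ := sInf B with ht₂def
    have ht₂B : t₂ ∈ B := hBclosed.csInf_mem hBne hBbdd
    have ht₂Icc : t₂ ∈ Set.Icc (0:ℝ) T := ht₂B.1
    have ht₂ge : 2 * N ≤ ‖f t₂‖ := ht₂B.2
    have ht₂pos : 0 < t₂ := by
      rcases lt_or_eq_of_le ht₂Icc.1 with h | h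
      · exact h
      · exfalso
        rw [← h] at ht₂ge
        rw [hf0] at ht₂ge
        nlinarith
    have hlt : ∀ τ ∈ Set.Ico (0:ℝ) t₂, ‖f τ‖ ≤ 2 * N := by
      intro τ hτ
      by_contra hτc
      push_neg at hτc
      have : τ ∈ B := ⟨⟨hτ.1, le_trans hτ.2.le ht₂Icc.2⟩, hτc.le⟩
      exact absurd (csInf_le hBbdd this) (not_le.mpr hτ.2)
    have ht₂le : ‖f t₂‖ ≤ 2 * N := by
      have hDclosed : IsClosed (Set.Icc 0 T ∩ (fun t => ‖f t‖) ⁻¹' Set.Iic (2 * N)) :=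
        hfc.norm.preimage_isClosed_of_isClosed isClosed_Icc isClosed_Iic
      have hsub : Set.Ico (0:ℝ) t₂ ⊆ Set.Icc 0 T ∩ (fun t => ‖f t‖) ⁻¹' Set.Iic (2 * N) :=
        fun τ hτ => ⟨⟨hτ.1, le_trans hτ.2.le ht₂Icc.2⟩, hlt τ hτ⟩
      have hmem : t₂ ∈ closure (Set.Ico (0:ℝ) t₂) := by
        rw [closure_Ico (ne_of_lt ht₂pos)]
        exact ⟨ht₂pos.le, le_rfl⟩
      exact (hDclosed.closure_subset ((closure_mono hsub) hmem)).2
    have : ‖f t₂‖ ≤ 3 / 2 * N := by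
      apply hkey t₂ ht₂Icc
      intro τ hτ
      rcases lt_or_eq_of_le hτ.2 with h | h
      · exact hlt τ ⟨hτ.1, h⟩
      · rw [h]; exact ht₂le
    nlinarith
  -- uniqueness helper: the Lipschitz/contraction estimate
  have hLT : Lr * T = 1 / 2 := by
    rw [hLrdef, hTdef]; field_simp; ring
  refine ⟨T, rfl, hT, f, hfc, hbound, fun t ht => by
      rw [hInt t ht], ?_⟩
  intro θ' hθ'c hθ'b hθ'eq
  set h : ℝ → H := fun t => θ' t - f t with hhdef
  have hhc : ContinuousOn (fun t => ‖h t‖) (Set.Icc 0 T) := (hθ'c.sub hfc).norm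
  obtain ⟨t₁, ht₁, hmax⟩ := isCompact_Icc.exists_isMaxOn
    (Set.nonempty_Icc.mpr hT.le) hhc
  have hmax' : ∀ τ ∈ Set.Icc (0:ℝ) T, ‖h τ‖ ≤ ‖h t₁‖ := fun τ hτ => hmax hτ
  have hint1 : ∀ t ∈ Set.Icc (0:ℝ) T, IntervalIntegrable (fun τ => v (θ' τ)) volume 0 t := by
    intro t ht
    apply ContinuousOn.intervalIntegrable
    rw [Set.uIcc_of_le ht.1]
    exact hv_cont.comp_continuousOn (hθ'c.mono (Set.Icc_subset_Icc le_rfl ht.2))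
  have hint2 : ∀ t ∈ Set.Icc (0:ℝ) T, IntervalIntegrable (fun τ => v (f τ)) volume 0 t := by
    intro t ht
    apply ContinuousOn.intervalIntegrable
    rw [Set.uIcc_of_le ht.1]
    exact hv_cont.comp_continuousOn (hfc.mono (Set.Icc_subset_Icc le_rfl ht.2))
  have hdiff : h t₁ = ∫ τ in (0:ℝ)..t₁, (v (θ' τ) - v (f τ)) := by
    rw [intervalIntegral.integral_sub (hint1 t₁ ht₁) (hint2 t₁ ht₁)]
    rw [hhdef]
    simp only
    rw [hθ'eq t₁ ht₁, hInt t₁ ht₁]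
    abel
  have hest2 : ‖∫ τ in (0:ℝ)..t₁, (v (θ' τ) - v (f τ))‖ ≤ Lr * ‖h t₁‖ * |t₁ - 0| := by
    apply intervalIntegral.norm_integral_le_of_norm_le_const
    intro τ hτ
    rw [Set.uIoc_of_le ht₁.1] at hτ
    have hτIcc : τ ∈ Set.Icc (0:ℝ) T := ⟨hτ.1.le, le_trans hτ.2 ht₁.2⟩
    calc ‖v (θ' τ) - v (f τ)‖ ≤ Lr * ‖θ' τ - f τ‖ :=
          hv_lip _ _ (hθ'b τ hτIcc) (hbound τ hτIcc)
      _ ≤ Lr * ‖h t₁‖ := mul_le_mul_of_nonneg_left (hmax' τ hτIcc) hLr.le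
  have hest : ‖h t₁‖ ≤ Lr * ‖h t₁‖ * |t₁ - 0| :=
    (congrArg norm hdiff).trans_le hest2
  have ht₁abs : |t₁ - 0| ≤ T := by
    rw [sub_zero, abs_of_nonneg ht₁.1]; exact ht₁.2
  have : ‖h t₁‖ ≤ (1 / 2) * ‖h t₁‖ := by
    calc ‖h t₁‖ ≤ Lr * ‖h t₁‖ * |t₁ - 0| := hest
      _ ≤ Lr * ‖h t₁‖ * T := mul_le_mul_of_nonneg_left ht₁abs (mul_nonneg hLr.le (norm_nonneg _))
      _ = (Lr * T) * ‖h t₁‖ := by ring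
      _ = (1 / 2) * ‖h t₁‖ := by rw [hLT]
  have hzero : ‖h t₁‖ ≤ 0 := by nlinarith [norm_nonneg (h t₁)]
  intro t ht
  have : ‖h t‖ ≤ 0 := le_trans (hmax' t ht) hzero
  have : h t = 0 := norm_le_zero_iff.mp this
  have := sub_eq_zero.mp this
  exact this
end

section
/- Let u, θ ∈ B^{s,∞}_3 with 0 < s < 1, let φ^ε be a standard mollifier, and define r^ε(u,θ)(x) = ∫ φ(y)[u(x-εy) - u(x)]·[θ(x-εy) - θ(x)] dy. Then |r^ε(u,θ)|_{L^{3/2}} ≤ C ε^{2s} ||u||_{B^{s,∞}_3} ||θ||_{B^{s,∞}_3}. -/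
open MeasureTheory
open scoped ENNReal

/-- bound on the Constantin–E–Titi remainder: for
`u, θ ∈ B^{s,∞}_3`, `0 < s < 1`, with `L³` translation increments bounded by
`|F(·+y) - F|_{L³} ≤ |y|^s M_F`, the remainder
`r^ε(u,θ)(x) = ∫ φ(y)[u(x-εy) - u(x)][θ(x-εy) - θ(x)] dy` satisfies
`|r^ε(u,θ)|_{L^{3/2}} ≤ C ε^{2s} M_u M_θ`, with `C` depending only on `φ`. -/
theorem remainder_besov_estimate (φ : ℝ × ℝ → ℝ) (hφs : ContDiff ℝ (⊤ : ℕ∞) φ)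
    (hφc : HasCompactSupport φ) (hφ0 : ∀ x, 0 ≤ φ x) (hφ1 : (∫ x, φ x) = 1) :
    ∃ C : ℝ, 0 < C ∧
      ∀ (s ε Mu Mθ : ℝ), 0 < s → s < 1 → 0 < ε → 0 ≤ Mu → 0 ≤ Mθ →
      ∀ u θ : ℝ × ℝ → ℝ, MemLp u 3 volume → MemLp θ 3 volume →
        (∀ y : ℝ × ℝ,
          eLpNorm (fun x => u (x + y) - u x) 3 volume ≤ ENNReal.ofReal (‖y‖ ^ s * Mu)) →
        (∀ y : ℝ × ℝ,
          eLpNorm (fun x => θ (x + y) - θ x) 3 volume ≤ ENNReal.ofReal (‖y‖ ^ s * Mθ)) →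
        eLpNorm
            (fun x => ∫ y, φ y * ((u (x - ε • y) - u x) * (θ (x - ε • y) - θ x)))
            (3 / 2) volume
          ≤ ENNReal.ofReal (C * ε ^ (2 * s) * Mu * Mθ) := by
  classical
  have hφcont : Continuous φ := hφs.continuous
  have hφint : Integrable φ := hφcont.integrable_of_hasCompactSupport hφc
  have hKint : Integrable (fun y : ℝ × ℝ => φ y * (1 + ‖y‖ ^ 3)) :=
    (hφcont.mul (continuous_const.add (continuous_norm.pow 3))).integrable_of_hasCompactSupport
      (hφc.mul_right)
  set K : ℝ := ∫ y : ℝ × ℝ, φ y * (1 + ‖y‖ ^ 3) with hKdef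
  have hKnn : ∀ y : ℝ × ℝ, 0 ≤ φ y * (1 + ‖y‖ ^ 3) := fun y => by
    have := hφ0 y; have := norm_nonneg y; positivity
  have hK1 : (1 : ℝ) ≤ K := by
    rw [← hφ1]
    refine integral_mono hφint hKint fun y => ?_
    have h0 := hφ0 y
    have h3 : (0:ℝ) ≤ ‖y‖ ^ 3 := by positivity
    nlinarith
  have hKpos : (0 : ℝ) < K := lt_of_lt_of_le one_pos hK1
  refine ⟨K ^ (2/3 : ℝ), Real.rpow_pos_of_pos hKpos _, ?_⟩
  intro s ε Mu Mθ hs hs1 hε hMu hMθ u θ hu hθ hbu hbθ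
  -- basic measurability
  have hφm : Measurable fun y : ℝ × ℝ => ENNReal.ofReal (φ y) :=
    ENNReal.measurable_ofReal.comp hφcont.measurable
  have hum : AEMeasurable u (volume : Measure (ℝ × ℝ)) := hu.aestronglyMeasurable.aemeasurable
  have hθm : AEMeasurable θ (volume : Measure (ℝ × ℝ)) := hθ.aestronglyMeasurable.aemeasurable
  have hT : Measure.QuasiMeasurePreserving (fun p : (ℝ × ℝ) × (ℝ × ℝ) => p.1 - ε • p.2)
      (volume.prod volume) volume := by
    have hsm : Measure.QuasiMeasurePreserving
        (Prod.map (id : ℝ × ℝ → ℝ × ℝ) (ε • · : ℝ × ℝ → ℝ × ℝ))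
        (volume.prod volume) (volume.prod volume) := by
      refine ⟨measurable_id.prodMap (measurable_const_smul ε), ?_⟩
      rw [← Measure.map_prod_map _ _ measurable_id (measurable_const_smul ε), Measure.map_id]
      exact Measure.AbsolutelyContinuous.rfl.prod
        (Measure.quasiMeasurePreserving_smul volume hε.ne').absolutelyContinuous
    exact (quasiMeasurePreserving_sub volume volume).comp hsm
  have hu1 : AEMeasurable (fun p : (ℝ × ℝ) × (ℝ × ℝ) => u (p.1 - ε • p.2))
      (volume.prod volume) := hum.comp_quasiMeasurePreserving hT
  have hu2 : AEMeasurable (fun p : (ℝ × ℝ) × (ℝ × ℝ) => u p.1) (volume.prod volume) :=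
    hum.comp_quasiMeasurePreserving Measure.quasiMeasurePreserving_fst
  have hθ1 : AEMeasurable (fun p : (ℝ × ℝ) × (ℝ × ℝ) => θ (p.1 - ε • p.2))
      (volume.prod volume) := hθm.comp_quasiMeasurePreserving hT
  have hθ2 : AEMeasurable (fun p : (ℝ × ℝ) × (ℝ × ℝ) => θ p.1) (volume.prod volume) :=
    hθm.comp_quasiMeasurePreserving Measure.quasiMeasurePreserving_fst
  have hGm : AEMeasurable
      (fun p : (ℝ × ℝ) × (ℝ × ℝ) =>
        (‖u (p.1 - ε • p.2) - u p.1‖₊ : ℝ≥0∞) * ‖θ (p.1 - ε • p.2) - θ p.1‖₊)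
      (volume.prod volume) := ((hu1.sub hu2).enorm).mul ((hθ1.sub hθ2).enorm)
  -- a.e. sections are measurable
  have hsec : ∀ᵐ x ∂(volume : Measure (ℝ × ℝ)),
      AEMeasurable (fun y : ℝ × ℝ =>
        (‖u (x - ε • y) - u x‖₊ : ℝ≥0∞) * ‖θ (x - ε • y) - θ x‖₊) volume := by
    obtain ⟨G', hG'meas, hG'eq⟩ := hGm
    filter_upwards [Measure.ae_ae_eq_curry_of_prod hG'eq] with x hx
    exact ⟨fun y => G' (x, y), hG'meas.comp measurable_prodMk_left, hx⟩
  have hφlint : (∫⁻ y : ℝ × ℝ, ENNReal.ofReal (φ y)) = 1 := by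
    rw [← ofReal_integral_eq_lintegral_ofReal hφint (Filter.Eventually.of_forall hφ0), hφ1,
      ENNReal.ofReal_one]
  -- Step A: pointwise (a.e.) bound after Jensen/Hölder in y
  have stepA : ∀ᵐ x ∂(volume : Measure (ℝ × ℝ)),
      (‖∫ y, φ y * ((u (x - ε • y) - u x) * (θ (x - ε • y) - θ x))‖₊ : ℝ≥0∞) ^ (3/2 : ℝ)
        ≤ ∫⁻ y, ENNReal.ofReal (φ y) *
            ((‖u (x - ε • y) - u x‖₊ : ℝ≥0∞) * ‖θ (x - ε • y) - θ x‖₊) ^ (3/2 : ℝ) := by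
    filter_upwards [hsec] with x hx
    set a : ℝ × ℝ → ℝ≥0∞ := fun y =>
      (‖u (x - ε • y) - u x‖₊ : ℝ≥0∞) * ‖θ (x - ε • y) - θ x‖₊ with ha
    have h1 : (‖∫ y, φ y * ((u (x - ε • y) - u x) * (θ (x - ε • y) - θ x))‖₊ : ℝ≥0∞)
        ≤ ∫⁻ y, ENNReal.ofReal (φ y) * a y := by
      refine le_trans (enorm_integral_le_lintegral_enorm _) (le_of_eq ?_)
      refine lintegral_congr fun y => ?_
      rw [ha]
      rw [enorm_mul, enorm_mul,
        Real.enorm_eq_ofReal (hφ0 y)] <;> rfl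
    have hconj : Real.HolderConjugate 3 (3/2) := Real.holderConjugate_iff.mpr ⟨by norm_num, by norm_num⟩
    have hH := ENNReal.lintegral_mul_le_Lp_mul_Lq (volume : Measure (ℝ × ℝ)) hconj
      (f := fun y => (ENNReal.ofReal (φ y)) ^ (1/3 : ℝ))
      (g := fun y => (ENNReal.ofReal (φ y)) ^ (2/3 : ℝ) * a y)
      ((hφm.pow_const _).aemeasurable) (((hφm.pow_const _).aemeasurable).mul hx)
    have hfg : ∀ y : ℝ × ℝ,
        ((fun y => (ENNReal.ofReal (φ y)) ^ (1/3 : ℝ)) *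
          fun y => (ENNReal.ofReal (φ y)) ^ (2/3 : ℝ) * a y) y
          = ENNReal.ofReal (φ y) * a y := by
      intro y
      simp only [Pi.mul_apply]
      rw [← mul_assoc, ← ENNReal.rpow_add_of_nonneg _ _ (by norm_num) (by norm_num)]
      norm_num
    have hfp : ∀ y : ℝ × ℝ, ((ENNReal.ofReal (φ y)) ^ (1/3 : ℝ)) ^ (3 : ℝ)
        = ENNReal.ofReal (φ y) := by
      intro y
      rw [← ENNReal.rpow_mul]
      norm_num
    have hgp : ∀ y : ℝ × ℝ, ((ENNReal.ofReal (φ y)) ^ (2/3 : ℝ) * a y) ^ (3/2 : ℝ)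
        = ENNReal.ofReal (φ y) * a y ^ (3/2 : ℝ) := by
      intro y
      rw [ENNReal.mul_rpow_of_nonneg _ _ (by norm_num), ← ENNReal.rpow_mul]
      norm_num
    have h2 : (∫⁻ y, ENNReal.ofReal (φ y) * a y)
        ≤ (∫⁻ y, ENNReal.ofReal (φ y) * a y ^ (3/2 : ℝ)) ^ (2/3 : ℝ) := by
      calc (∫⁻ y, ENNReal.ofReal (φ y) * a y)
          = ∫⁻ y, ((fun y => (ENNReal.ofReal (φ y)) ^ (1/3 : ℝ)) *
              fun y => (ENNReal.ofReal (φ y)) ^ (2/3 : ℝ) * a y) y :=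
            (lintegral_congr hfg).symm
        _ ≤ (∫⁻ y, ((ENNReal.ofReal (φ y)) ^ (1/3 : ℝ)) ^ (3 : ℝ)) ^ (1/(3:ℝ)) *
            (∫⁻ y, ((ENNReal.ofReal (φ y)) ^ (2/3 : ℝ) * a y) ^ ((3:ℝ)/2)) ^ (1/((3:ℝ)/2)) := hH
        _ = (∫⁻ y, ENNReal.ofReal (φ y) * a y ^ (3/2 : ℝ)) ^ (2/3 : ℝ) := by
            rw [lintegral_congr hfp, lintegral_congr hgp, hφlint]
            norm_num
    calc (‖∫ y, φ y * ((u (x - ε • y) - u x) * (θ (x - ε • y) - θ x))‖₊ : ℝ≥0∞) ^ (3/2 : ℝ)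
        ≤ ((∫⁻ y, ENNReal.ofReal (φ y) * a y ^ (3/2 : ℝ)) ^ (2/3 : ℝ)) ^ (3/2 : ℝ) :=
          ENNReal.rpow_le_rpow (le_trans h1 h2) (by norm_num)
      _ = ∫⁻ y, ENNReal.ofReal (φ y) * a y ^ (3/2 : ℝ) := by
          rw [← ENNReal.rpow_mul]; norm_num
  -- Step D : Hoelder in x at fixed y, plus the Besov increment bounds
  have hdy : ∀ y : ℝ × ℝ,
      (∫⁻ x, ((‖u (x - ε • y) - u x‖₊ : ℝ≥0∞) * ‖θ (x - ε • y) - θ x‖₊) ^ (3/2 : ℝ))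
        ≤ (ENNReal.ofReal (ε ^ s * ‖y‖ ^ s * Mu)) ^ (3/2 : ℝ) *
          (ENNReal.ofReal (ε ^ s * ‖y‖ ^ s * Mθ)) ^ (3/2 : ℝ) := by
    intro y
    have hmp : MeasurePreserving (fun x : ℝ × ℝ => x - ε • y) volume volume :=
      measurePreserving_sub_right volume (ε • y)
    have hau : AEMeasurable (fun x : ℝ × ℝ => u (x - ε • y) - u x) volume :=
      (hum.comp_quasiMeasurePreserving hmp.quasiMeasurePreserving).sub hum
    have haθ : AEMeasurable (fun x : ℝ × ℝ => θ (x - ε • y) - θ x) volume :=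
      (hθm.comp_quasiMeasurePreserving hmp.quasiMeasurePreserving).sub hθm
    have ht3 : ((3 : ℝ≥0∞)).toReal = (3 : ℝ) := by simp
    have keyu : (∫⁻ x, (‖u (x - ε • y) - u x‖₊ : ℝ≥0∞) ^ (3 : ℝ))
        = (eLpNorm (fun x => u (x - ε • y) - u x) 3 volume) ^ (3 : ℝ) := by
      rw [eLpNorm_eq_lintegral_rpow_enorm_toReal (by norm_num) (by norm_num), ht3,
        ← ENNReal.rpow_mul]
      norm_num
      rfl
    have keyθ : (∫⁻ x, (‖θ (x - ε • y) - θ x‖₊ : ℝ≥0∞) ^ (3 : ℝ))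
        = (eLpNorm (fun x => θ (x - ε • y) - θ x) 3 volume) ^ (3 : ℝ) := by
      rw [eLpNorm_eq_lintegral_rpow_enorm_toReal (by norm_num) (by norm_num), ht3,
        ← ENNReal.rpow_mul]
      norm_num
      rfl
    have hnormy : ‖-(ε • y)‖ ^ s = ε ^ s * ‖y‖ ^ s := by
      rw [norm_neg, norm_smul, Real.norm_eq_abs, abs_of_pos hε,
        Real.mul_rpow hε.le (norm_nonneg y)]
    have hbu' : eLpNorm (fun x => u (x - ε • y) - u x) 3 volume
        ≤ ENNReal.ofReal (ε ^ s * ‖y‖ ^ s * Mu) := by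
      have h := hbu (-(ε • y))
      have heq : (fun x : ℝ × ℝ => u (x + -(ε • y)) - u x)
          = fun x => u (x - ε • y) - u x := by
        funext x; rw [← sub_eq_add_neg]
      rw [heq] at h
      refine h.trans (le_of_eq ?_)
      rw [hnormy]
    have hbθ' : eLpNorm (fun x => θ (x - ε • y) - θ x) 3 volume
        ≤ ENNReal.ofReal (ε ^ s * ‖y‖ ^ s * Mθ) := by
      have h := hbθ (-(ε • y))
      have heq : (fun x : ℝ × ℝ => θ (x + -(ε • y)) - θ x)
          = fun x => θ (x - ε • y) - θ x := by
        funext x; rw [← sub_eq_add_neg]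
      rw [heq] at h
      refine h.trans (le_of_eq ?_)
      rw [hnormy]
    have hIu : (∫⁻ x, (‖u (x - ε • y) - u x‖₊ : ℝ≥0∞) ^ (3 : ℝ))
        ≤ (ENNReal.ofReal (ε ^ s * ‖y‖ ^ s * Mu)) ^ (3 : ℝ) := by
      rw [keyu]; exact ENNReal.rpow_le_rpow hbu' (by norm_num)
    have hIθ : (∫⁻ x, (‖θ (x - ε • y) - θ x‖₊ : ℝ≥0∞) ^ (3 : ℝ))
        ≤ (ENNReal.ofReal (ε ^ s * ‖y‖ ^ s * Mθ)) ^ (3 : ℝ) := by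
      rw [keyθ]; exact ENNReal.rpow_le_rpow hbθ' (by norm_num)
    have hconj2 : Real.HolderConjugate 2 2 := Real.holderConjugate_iff.mpr ⟨one_lt_two, by norm_num⟩
    have hH2 := ENNReal.lintegral_mul_le_Lp_mul_Lq (volume : Measure (ℝ × ℝ)) hconj2
      (f := fun x => (‖u (x - ε • y) - u x‖₊ : ℝ≥0∞) ^ (3/2 : ℝ))
      (g := fun x => (‖θ (x - ε • y) - θ x‖₊ : ℝ≥0∞) ^ (3/2 : ℝ))
      (hau.enorm.pow_const _) (haθ.enorm.pow_const _)
    calc (∫⁻ x, ((‖u (x - ε • y) - u x‖₊ : ℝ≥0∞) * ‖θ (x - ε • y) - θ x‖₊) ^ (3/2 : ℝ))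
        = ∫⁻ x, ((fun x => (‖u (x - ε • y) - u x‖₊ : ℝ≥0∞) ^ (3/2 : ℝ)) *
            fun x => (‖θ (x - ε • y) - θ x‖₊ : ℝ≥0∞) ^ (3/2 : ℝ)) x := by
          refine lintegral_congr fun x => ?_
          simp only [Pi.mul_apply]
          rw [ENNReal.mul_rpow_of_nonneg _ _ (by norm_num)]
      _ ≤ (∫⁻ x, ((‖u (x - ε • y) - u x‖₊ : ℝ≥0∞) ^ (3/2 : ℝ)) ^ (2 : ℝ)) ^ (1/(2:ℝ)) *
          (∫⁻ x, ((‖θ (x - ε • y) - θ x‖₊ : ℝ≥0∞) ^ (3/2 : ℝ)) ^ (2 : ℝ)) ^ (1/(2:ℝ)) := hH2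
      _ = (∫⁻ x, (‖u (x - ε • y) - u x‖₊ : ℝ≥0∞) ^ (3 : ℝ)) ^ (1/(2:ℝ)) *
          (∫⁻ x, (‖θ (x - ε • y) - θ x‖₊ : ℝ≥0∞) ^ (3 : ℝ)) ^ (1/(2:ℝ)) := by
          congr 1
          · congr 1
            refine lintegral_congr fun x => ?_
            rw [← ENNReal.rpow_mul]; norm_num
          · congr 1
            refine lintegral_congr fun x => ?_
            rw [← ENNReal.rpow_mul]; norm_num
      _ ≤ ((ENNReal.ofReal (ε ^ s * ‖y‖ ^ s * Mu)) ^ (3 : ℝ)) ^ (1/(2:ℝ)) *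
          ((ENNReal.ofReal (ε ^ s * ‖y‖ ^ s * Mθ)) ^ (3 : ℝ)) ^ (1/(2:ℝ)) :=
          mul_le_mul' (ENNReal.rpow_le_rpow hIu (by norm_num))
            (ENNReal.rpow_le_rpow hIθ (by norm_num))
      _ = (ENNReal.ofReal (ε ^ s * ‖y‖ ^ s * Mu)) ^ (3/2 : ℝ) *
          (ENNReal.ofReal (ε ^ s * ‖y‖ ^ s * Mθ)) ^ (3/2 : ℝ) := by
          rw [← ENNReal.rpow_mul, ← ENNReal.rpow_mul]; norm_num
  -- pointwise bound in y for the outer integral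
  have hAnn : ∀ y : ℝ × ℝ, (0:ℝ) ≤ ε ^ s * ‖y‖ ^ s * Mu := fun y => by
    have h1 : (0:ℝ) ≤ ε ^ s := Real.rpow_nonneg hε.le s
    have h2 : (0:ℝ) ≤ ‖y‖ ^ s := Real.rpow_nonneg (norm_nonneg y) s
    positivity
  have hBnn : ∀ y : ℝ × ℝ, (0:ℝ) ≤ ε ^ s * ‖y‖ ^ s * Mθ := fun y => by
    have h1 : (0:ℝ) ≤ ε ^ s := Real.rpow_nonneg hε.le s
    have h2 : (0:ℝ) ≤ ‖y‖ ^ s := Real.rpow_nonneg (norm_nonneg y) s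
    positivity
  set D : ℝ := ε ^ (3*s) * (Mu*Mθ) ^ ((3:ℝ)/2) with hDdef
  have hD0 : (0:ℝ) ≤ D := by
    have h1 : (0:ℝ) ≤ ε ^ (3*s) := Real.rpow_nonneg hε.le _
    have h2 : (0:ℝ) ≤ (Mu*Mθ) ^ ((3:ℝ)/2) := Real.rpow_nonneg (mul_nonneg hMu hMθ) _
    positivity
  have hreal : ∀ y : ℝ × ℝ,
      φ y * ((ε ^ s * ‖y‖ ^ s * Mu) ^ ((3:ℝ)/2) * (ε ^ s * ‖y‖ ^ s * Mθ) ^ ((3:ℝ)/2))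
        ≤ (φ y * (1 + ‖y‖ ^ 3)) * D := by
    intro y
    have hεs : (0:ℝ) ≤ ε ^ s := Real.rpow_nonneg hε.le s
    have hys : (0:ℝ) ≤ ‖y‖ ^ s := Real.rpow_nonneg (norm_nonneg y) s
    have ht0 : (0:ℝ) ≤ ε ^ s * ‖y‖ ^ s := mul_nonneg hεs hys
    have hAB : (ε ^ s * ‖y‖ ^ s * Mu) * (ε ^ s * ‖y‖ ^ s * Mθ)
        = (ε ^ s * ‖y‖ ^ s) ^ (2:ℕ) * (Mu * Mθ) := by ring
    have hprod : (ε ^ s * ‖y‖ ^ s * Mu) ^ ((3:ℝ)/2) * (ε ^ s * ‖y‖ ^ s * Mθ) ^ ((3:ℝ)/2)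
        = ((ε ^ s * ‖y‖ ^ s) ^ (2:ℕ) * (Mu * Mθ)) ^ ((3:ℝ)/2) := by
      rw [← Real.mul_rpow (hAnn y) (hBnn y), hAB]
    have hsq : (((ε ^ s * ‖y‖ ^ s) ^ (2:ℕ) * (Mu * Mθ)) : ℝ) ^ ((3:ℝ)/2)
        = (ε ^ s * ‖y‖ ^ s) ^ (3:ℝ) * (Mu * Mθ) ^ ((3:ℝ)/2) := by
      rw [Real.mul_rpow (by positivity) (mul_nonneg hMu hMθ), ← Real.rpow_natCast
        (ε ^ s * ‖y‖ ^ s) 2, ← Real.rpow_mul ht0]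
      norm_num
    have hcube : (ε ^ s * ‖y‖ ^ s) ^ (3:ℝ) = ε ^ (3*s) * ‖y‖ ^ (3*s) := by
      rw [Real.mul_rpow hεs hys, ← Real.rpow_mul hε.le, ← Real.rpow_mul (norm_nonneg y),
        mul_comm s 3]
    have hny : ‖y‖ ^ (3*s) ≤ 1 + ‖y‖ ^ 3 := by
      rcases le_or_gt ‖y‖ 1 with h | h
      · have h1 : ‖y‖ ^ (3*s) ≤ 1 :=
          Real.rpow_le_one (norm_nonneg y) h (by positivity)
        have h2 : (0:ℝ) ≤ ‖y‖ ^ 3 := by positivity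
        linarith
      · have h1 : ‖y‖ ^ (3*s) ≤ ‖y‖ ^ ((3:ℕ):ℝ) := by
          refine Real.rpow_le_rpow_of_exponent_le h.le ?_
          push_cast
          nlinarith
        rw [Real.rpow_natCast] at h1
        linarith
    rw [hprod, hsq, hcube, hDdef]
    have hφy := hφ0 y
    have hMM : (0:ℝ) ≤ (Mu * Mθ) ^ ((3:ℝ)/2) := Real.rpow_nonneg (mul_nonneg hMu hMθ) _
    have hε3 : (0:ℝ) ≤ ε ^ (3*s) := Real.rpow_nonneg hε.le _
    calc φ y * (ε ^ (3*s) * ‖y‖ ^ (3*s) * (Mu * Mθ) ^ ((3:ℝ)/2))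
        ≤ φ y * (ε ^ (3*s) * (1 + ‖y‖ ^ 3) * (Mu * Mθ) ^ ((3:ℝ)/2)) := by
          have := mul_le_mul_of_nonneg_left hny hε3
          have := mul_le_mul_of_nonneg_right this hMM
          exact mul_le_mul_of_nonneg_left this hφy
      _ = (φ y * (1 + ‖y‖ ^ 3)) * (ε ^ (3*s) * (Mu*Mθ) ^ ((3:ℝ)/2)) := by ring
  -- main estimate on the lintegral
  have hH : AEMeasurable
      (fun p : (ℝ × ℝ) × (ℝ × ℝ) => ENNReal.ofReal (φ p.2) *
        ((‖u (p.1 - ε • p.2) - u p.1‖₊ : ℝ≥0∞) * ‖θ (p.1 - ε • p.2) - θ p.1‖₊) ^ (3/2 : ℝ))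
      (volume.prod volume) :=
    ((hφm.comp measurable_snd).aemeasurable).mul (hGm.pow_const _)
  have main : (∫⁻ x, (‖∫ y, φ y * ((u (x - ε • y) - u x) * (θ (x - ε • y) - θ x))‖₊ : ℝ≥0∞)
        ^ (3/2 : ℝ))
      ≤ ENNReal.ofReal K * ENNReal.ofReal D := by
    calc (∫⁻ x, (‖∫ y, φ y * ((u (x - ε • y) - u x) * (θ (x - ε • y) - θ x))‖₊ : ℝ≥0∞)
          ^ (3/2 : ℝ))
        ≤ ∫⁻ x, ∫⁻ y, ENNReal.ofReal (φ y) *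
            ((‖u (x - ε • y) - u x‖₊ : ℝ≥0∞) * ‖θ (x - ε • y) - θ x‖₊) ^ (3/2 : ℝ) :=
          lintegral_mono_ae stepA
      _ = ∫⁻ y, ∫⁻ x, ENNReal.ofReal (φ y) *
            ((‖u (x - ε • y) - u x‖₊ : ℝ≥0∞) * ‖θ (x - ε • y) - θ x‖₊) ^ (3/2 : ℝ) :=
          lintegral_lintegral_swap hH
      _ ≤ ∫⁻ y, ENNReal.ofReal (φ y) *
            ((ENNReal.ofReal (ε ^ s * ‖y‖ ^ s * Mu)) ^ (3/2 : ℝ) *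
             (ENNReal.ofReal (ε ^ s * ‖y‖ ^ s * Mθ)) ^ (3/2 : ℝ)) := by
          refine lintegral_mono fun y => ?_
          rw [lintegral_const_mul' _ _ ENNReal.ofReal_ne_top]
          exact mul_le_mul_right (hdy y) _
      _ ≤ ∫⁻ y, ENNReal.ofReal (φ y * (1 + ‖y‖ ^ 3)) * ENNReal.ofReal D := by
          refine lintegral_mono fun y => ?_
          rw [ENNReal.ofReal_rpow_of_nonneg (hAnn y) (by norm_num),
            ENNReal.ofReal_rpow_of_nonneg (hBnn y) (by norm_num),
            ← ENNReal.ofReal_mul (Real.rpow_nonneg (hAnn y) _),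
            ← ENNReal.ofReal_mul (hφ0 y), ← ENNReal.ofReal_mul (hKnn y)]
          exact ENNReal.ofReal_le_ofReal (hreal y)
      _ = ENNReal.ofReal K * ENNReal.ofReal D := by
          rw [lintegral_mul_const' _ _ ENNReal.ofReal_ne_top,
            ← ofReal_integral_eq_lintegral_ofReal hKint
              (Filter.Eventually.of_forall hKnn)]
  -- conclude
  have hp0 : ((3:ℝ≥0∞)/2) ≠ 0 := by
    simp [ENNReal.div_eq_top]
  have hpt : ((3:ℝ≥0∞)/2) ≠ ⊤ := by
    simp [ENNReal.div_eq_top]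
  have htr : ((3:ℝ≥0∞)/2).toReal = (3:ℝ)/2 := by
    rw [ENNReal.toReal_div]; norm_num
  rw [eLpNorm_eq_lintegral_rpow_enorm_toReal hp0 hpt, htr,
    show (1 / ((3:ℝ)/2)) = (2/3 : ℝ) by norm_num]
  calc (∫⁻ x, (‖∫ y, φ y * ((u (x - ε • y) - u x) * (θ (x - ε • y) - θ x))‖₊ : ℝ≥0∞)
        ^ ((3:ℝ)/2)) ^ ((2:ℝ)/3)
      ≤ (ENNReal.ofReal K * ENNReal.ofReal D) ^ ((2:ℝ)/3) :=
        ENNReal.rpow_le_rpow main (by norm_num)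
    _ = ENNReal.ofReal ((K * D) ^ ((2:ℝ)/3)) := by
        rw [← ENNReal.ofReal_mul hKpos.le,
          ENNReal.ofReal_rpow_of_nonneg (mul_nonneg hKpos.le hD0) (by norm_num)]
    _ = ENNReal.ofReal (K ^ (2/3:ℝ) * ε ^ (2*s) * Mu * Mθ) := by
        congr 1
        rw [Real.mul_rpow hKpos.le hD0, hDdef,
          Real.mul_rpow (Real.rpow_nonneg hε.le _) (Real.rpow_nonneg (mul_nonneg hMu hMθ) _),
          ← Real.rpow_mul hε.le, ← Real.rpow_mul (mul_nonneg hMu hMθ),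
          show (3*s) * (2/3 : ℝ) = 2*s by ring,
          show ((3:ℝ)/2) * (2/3 : ℝ) = 1 by norm_num, Real.rpow_one]
        ring
end
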